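/- For every t > 0 and all sign vectors ε, ε' : Fin 3 → ℝ (values in {-1,1}), the Minkowski inner product ⟨P t ε, N t ε'⟩ equals 0 if and only if ε and ε' differ in at most one coordinate. (Hence the 32 orthogonality relations between positive and negative octet walls of the 24-cell persist throughout the whole deformation of Table 6.1, while all other positive–negative pairs never become orthogonal.) -/
import Mathlib


/-- The Minkowski inner product on `ℝ^{1,4}`, identified with `Fin 5 → ℝ`. -/
noncomputable def mink (v w : Fin 5 → ℝ) : ℝ :=
  -(v 0 * w 0) + v 1 * w 1 + v 2 * w 2 + v 3 * w 3 + v 4 * w 4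

/-- The positive octet space-like vectors of the deformed 24-cell (Table 6.1). -/
noncomputable def Pvec (t : ℝ) (ε : Fin 3 → ℝ) : Fin 5 → ℝ :=
  ![Real.sqrt 2, ε 0, ε 1, ε 2, (ε 0 * ε 1 * ε 2) / t]

/-- The negative octet space-like vectors of the deformed 24-cell (Table 6.1). -/
noncomputable def Nvec (t : ℝ) (ε : Fin 3 → ℝ) : Fin 5 → ℝ :=
  ![Real.sqrt 2, ε 0, ε 1, ε 2, -((ε 0 * ε 1 * ε 2) * t)]

open Classical in
lemma card3 (p : Fin 3 → Prop) :
    Nat.card {i : Fin 3 // p i} =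
      (if p 0 then 1 else 0) + (if p 1 then 1 else 0) + (if p 2 then 1 else 0) := by
  rw [Nat.card_eq_fintype_card, Fintype.card_subtype, Finset.card_filter,
    Fin.sum_univ_three]

/-- A positive and a negative octet wall vector of the deformed configuration are
Minkowski-orthogonal iff their sign vectors differ in at most one coordinate; hence the 32
positive–negative orthogonality relations persist throughout the deformation and no new
ones arise. -/
theorem positive_negative_orthogonality (t : ℝ) (ht : 0 < t)
    (ε ε' : Fin 3 → ℝ) (hε : ∀ i, ε i = -1 ∨ ε i = 1) (hε' : ∀ i, ε' i = -1 ∨ ε' i = 1) :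
    mink (Pvec t ε) (Nvec t ε') = 0 ↔ Nat.card {i : Fin 3 // ε i ≠ ε' i} ≤ 1 := by
  rw [card3 fun i => ε i ≠ ε' i]
  have hs : Real.sqrt 2 * Real.sqrt 2 = 2 := Real.mul_self_sqrt (by norm_num)
  have ht' : t ≠ 0 := ht.ne'
  rcases hε 0 with h0 | h0 <;> rcases hε 1 with h1 | h1 <;> rcases hε 2 with h2 | h2 <;>
    rcases hε' 0 with h0' | h0' <;> rcases hε' 1 with h1' | h1' <;>
    rcases hε' 2 with h2' | h2' <;>
    simp [mink, Pvec, Nvec, h0, h1, h2, h0', h1', h2', hs, ht'] <;> norm_num
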